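/- (Eq. (28): entropic disturbance bound in the quantum autoencoder) In the quantum autoencoder setup with input ensemble L = {p_i, |p_i⟩⟨p_i|}_{i=1}^r, the entropic disturbance satisfies Δχ ≤ Σ_{i=1}^r p_i S(ρ_A^{(i)}) + ln( Σ_{i=1}^r e^{−C(ρ_A^{(i)}, ρ_A)} ), where ρ_A = Tr_B[U ρ_in U†] and ρ_A^{(i)} = Tr_B[U |p_i⟩⟨p_i| U†]. -/

import Mathlib

open scoped Kronecker BigOperators ComplexOrder

namespace QCE

variable {ι : Type*} [Fintype ι] [DecidableEq ι]

/-- Apply a real function to a matrix via the spectral decomposition (functional calculus on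
the eigenvalues); returns `0` if the matrix is not Hermitian. -/
noncomputable def matFun (A : Matrix ι ι ℂ) (f : ℝ → ℝ) : Matrix ι ι ℂ :=
  if h : A.IsHermitian then h.cfc f else 0

/-- Matrix logarithm taken on the support (eigenvalue `0` is sent to `0`,
since `Real.log 0 = 0`). -/
noncomputable def matLog (A : Matrix ι ι ℂ) : Matrix ι ι ℂ :=
  matFun A Real.log

/-- Quantum cross entropy `C(ρ₁, ρ₂) = -Tr[ρ₁ ln ρ₂]`, with the logarithm on the support. -/
noncomputable def crossEnt (ρ₁ ρ₂ : Matrix ι ι ℂ) : ℝ :=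
  -((ρ₁ * matLog ρ₂).trace.re)

/-- Von Neumann entropy `S(ρ) = -Tr[ρ ln ρ]`. -/
noncomputable def vnEntropy (ρ : Matrix ι ι ℂ) : ℝ :=
  crossEnt ρ ρ

/-- A density matrix: positive semidefinite with unit trace. -/
def IsDensityMatrix (ρ : Matrix ι ι ℂ) : Prop :=
  ρ.PosSemidef ∧ ρ.trace = 1

/-- The rank-one projector `|v⟩⟨v|`. -/
noncomputable def outer (v : ι → ℂ) : Matrix ι ι ℂ :=
  Matrix.vecMulVec v (star v)

/-- An orthonormal family of vectors. -/
def OrthonormalFam {r : ℕ} (v : Fin r → ι → ℂ) : Prop :=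
  ∀ i j, (∑ a, star (v i a) * v j a) = if i = j then (1 : ℂ) else 0

/-- The Choi matrix of a linear map on matrices. -/
noncomputable def choi {κ : Type*} [Fintype κ] [DecidableEq κ]
    (Φ : Matrix ι ι ℂ →ₗ[ℂ] Matrix κ κ ℂ) : Matrix (ι × κ) (ι × κ) ℂ :=
  ∑ i : ι, ∑ j : ι, (Matrix.single i j (1 : ℂ)) ⊗ₖ (Φ (Matrix.single i j 1))

/-- A quantum channel: completely positive (positive semidefinite Choi matrix, by Choi's
theorem) and trace preserving. -/
def IsCPTP {κ : Type*} [Fintype κ] [DecidableEq κ]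
    (Φ : Matrix ι ι ℂ →ₗ[ℂ] Matrix κ κ ℂ) : Prop :=
  (choi Φ).PosSemidef ∧ ∀ ρ : Matrix ι ι ℂ, (Φ ρ).trace = ρ.trace

/-- Partial trace over the second tensor factor. -/
noncomputable def ptraceB {dA dB : ℕ}
    (ρ : Matrix (Fin dA × Fin dB) (Fin dA × Fin dB) ℂ) : Matrix (Fin dA) (Fin dA) ℂ :=
  Matrix.of fun i j => ∑ k : Fin dB, ρ (i, k) (j, k)

/-- Partial trace over the first tensor factor. -/
noncomputable def ptraceA {dA dB : ℕ}
    (ρ : Matrix (Fin dA × Fin dB) (Fin dA × Fin dB) ℂ) : Matrix (Fin dB) (Fin dB) ℂ :=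
  Matrix.of fun i j => ∑ k : Fin dA, ρ (k, i) (k, j)


/-- Matrix square root via the spectral decomposition. -/
noncomputable def matSqrt (A : Matrix ι ι ℂ) : Matrix ι ι ℂ :=
  matFun A Real.sqrt

/-- Quantum fidelity `F[ρ,σ] = (Tr[√(√ρ σ √ρ)])²`. -/
noncomputable def fidelity (ρ σ : Matrix ι ι ℂ) : ℝ :=
  ((matSqrt (matSqrt ρ * σ * matSqrt ρ)).trace.re) ^ 2


open Matrix

/-!
Both output states are conjugates, by the same unitary, of tensor products with `ρ_B`; von Neumann
entropy is invariant under isometric conjugation and additive on tensor products of unit-trace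
Hermitian matrices, so the `S(ρ_B)` terms cancel and `Δχ = H(p) - S(ρ_A) + ∑ pᵢ S(ρ_A⁽ⁱ⁾)`, where
`H(p) = S(ρ_in)` because the `|pᵢ⟩` are orthonormal. As `ρ_A = ∑ pᵢ ρ_A⁽ⁱ⁾` and the cross entropy
is linear in its first argument, `S(ρ_A) = ∑ pᵢ C(ρ_A⁽ⁱ⁾, ρ_A)`, and Jensen's inequality for `log`
gives `H(p) - ∑ pᵢ cᵢ ≤ log ∑ e^{-cᵢ}` for any reals `cᵢ`.

The entropies are computed with the continuous functional calculus: `log` vanishes at `0`, so the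
non-unital calculus applies and commutes with conjugation by a (not necessarily square) isometry.
-/

section FunctionalCalculus

variable {κ : Type*} [Fintype κ] [DecidableEq κ]

def isometryConj (V : Matrix ι κ ℂ) (hV : Vᴴ * V = 1) :
    Matrix κ κ ℂ →⋆ₙₐ[ℂ] Matrix ι ι ℂ where
  toFun X := V * X * Vᴴ
  map_smul' c X := by simp
  map_zero' := by simp
  map_add' X Y := by simp [Matrix.mul_add, Matrix.add_mul]
  map_mul' X Y := by
    simp only [Matrix.mul_assoc]
    rw [← Matrix.mul_assoc Vᴴ V, hV, Matrix.one_mul]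
  map_star' X := by
    simp [star_eq_conjTranspose, conjTranspose_mul, Matrix.mul_assoc]

theorem finite_real_quasispectrum (A : Matrix ι ι ℂ) : (quasispectrum ℝ A).Finite := by
  rw [quasispectrum_eq_spectrum_union_zero]
  exact A.finite_real_spectrum.union (Set.finite_singleton 0)

theorem matFun_eq_cfc {A : Matrix ι ι ℂ} (hA : A.IsHermitian) (f : ℝ → ℝ) :
    matFun A f = cfc f A := by
  rw [matFun, dif_pos hA, hA.cfc_eq]

theorem cfc_conj_isometry {V : Matrix ι κ ℂ} (hV : Vᴴ * V = 1) {A : Matrix κ κ ℂ}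
    (hA : A.IsHermitian) {f : ℝ → ℝ} (hf : f 0 = 0) :
    cfc f (V * A * Vᴴ) = V * cfc f A * Vᴴ := by
  have hVA : (V * A * Vᴴ).IsHermitian := isHermitian_mul_mul_conjTranspose V hA
  have hA' : cfcₙ f A = cfc f A :=
    cfcₙ_eq_cfc ((finite_real_quasispectrum _).continuousOn f) hf
  have hVA' : cfcₙ f (V * A * Vᴴ) = cfc f (V * A * Vᴴ) :=
    cfcₙ_eq_cfc ((finite_real_quasispectrum _).continuousOn f) hf
  rw [← hA', ← hVA']
  exact ((isometryConj V hV).map_cfcₙ f A ((finite_real_quasispectrum _).continuousOn f) hf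
    ((continuous_const.matrix_mul continuous_id).matrix_mul continuous_const) hA hVA).symm

open Polynomial in
theorem aeval_diagonal {R A : Type*} [CommSemiring R] [Semiring A] [Algebra R A]
    (c : κ → A) (P : R[X]) : aeval (diagonal c) P = diagonal fun i => aeval (c i) P := by
  rw [← diagonalAlgHom_apply R, aeval_algHom_apply, aeval_pi_apply]
  rfl

theorem isHermitian_diagonal_ofReal {n : Type*} [DecidableEq n] (d : n → ℝ) :
    (diagonal (Complex.ofReal ∘ d)).IsHermitian :=
  isHermitian_diagonal_iff.mpr fun i => by simp [IsSelfAdjoint]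

theorem cfc_diagonal_ofReal (d : κ → ℝ) (f : ℝ → ℝ) :
    cfc f (diagonal (Complex.ofReal ∘ d)) = diagonal (Complex.ofReal ∘ f ∘ d) := by
  let D : Matrix κ κ ℂ := diagonal (Complex.ofReal ∘ d)
  -- an interpolating polynomial of `f` on the diagonal entries and on the spectrum
  let s : Finset ℝ := Finset.univ.image d ∪ D.finite_real_spectrum.toFinset
  let P := Lagrange.interpolate s id f
  have hP : ∀ x ∈ s, P.eval x = f x := fun x hx =>
    Lagrange.eval_interpolate_at_node f Function.injective_id.injOn hx
  have hspec : (spectrum ℝ D).EqOn f P.eval := fun x hx =>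
    (hP x (Finset.mem_union_right _ (D.finite_real_spectrum.mem_toFinset.mpr hx))).symm
  rw [cfc_congr hspec, cfc_polynomial P D (isHermitian_diagonal_ofReal d).isSelfAdjoint,
    aeval_diagonal]
  congr 1
  ext i
  rw [Function.comp_apply, ← Complex.coe_algebraMap,
    Polynomial.aeval_algebraMap_apply_eq_algebraMap_eval,
    hP _ (Finset.mem_union_left _ (Finset.mem_image_of_mem d (Finset.mem_univ i)))]
  rfl

end FunctionalCalculus

section Entropy

variable {κ : Type*} [Fintype κ] [DecidableEq κ]

theorem trace_conj_isometry {m R : Type*} [Fintype m] [CommSemiring R] [StarRing R]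
    {V : Matrix m κ R} (hV : Vᴴ * V = 1) (A : Matrix κ κ R) : (V * A * Vᴴ).trace = A.trace := by
  rw [trace_mul_comm, ← Matrix.mul_assoc, hV, Matrix.one_mul]

theorem vnEntropy_conj_isometry {V : Matrix ι κ ℂ} (hV : Vᴴ * V = 1) {A : Matrix κ κ ℂ}
    (hA : A.IsHermitian) : vnEntropy (V * A * Vᴴ) = vnEntropy A := by
  have hmul : ∀ B C : Matrix κ κ ℂ, V * B * Vᴴ * (V * C * Vᴴ) = V * (B * C) * Vᴴ :=
    fun B C => (map_mul (isometryConj V hV) B C).symm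
  rw [vnEntropy, vnEntropy, crossEnt, crossEnt, matLog, matLog,
    matFun_eq_cfc (isHermitian_mul_mul_conjTranspose V hA), matFun_eq_cfc hA,
    cfc_conj_isometry hV hA Real.log_zero, hmul, trace_conj_isometry hV]

theorem vnEntropy_diagonal (d : κ → ℝ) :
    vnEntropy (diagonal (Complex.ofReal ∘ d)) = ∑ i, Real.negMulLog (d i) := by
  rw [vnEntropy, crossEnt, matLog, matFun_eq_cfc (isHermitian_diagonal_ofReal d),
    cfc_diagonal_ofReal, diagonal_mul_diagonal, trace_diagonal, Complex.re_sum,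
    ← Finset.sum_neg_distrib]
  simp [Real.negMulLog]

theorem isHermitian_kronecker {m n : Type*} {X : Matrix m m ℂ} {Y : Matrix n n ℂ}
    (hX : X.IsHermitian) (hY : Y.IsHermitian) : (X ⊗ₖ Y).IsHermitian := by
  rw [IsHermitian, conjTranspose_kronecker, hX.eq, hY.eq]

theorem _root_.Matrix.IsHermitian.exists_conj_diagonal {A : Matrix κ κ ℂ} (hA : A.IsHermitian) :
    ∃ (V : Matrix κ κ ℂ) (d : κ → ℝ),
      Vᴴ * V = 1 ∧ A = V * diagonal (Complex.ofReal ∘ d) * Vᴴ := by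
  refine ⟨hA.eigenvectorUnitary, hA.eigenvalues, ?_, ?_⟩
  · rw [← star_eq_conjTranspose]
    exact mem_unitaryGroup_iff'.mp hA.eigenvectorUnitary.2
  · simpa [Unitary.conjStarAlgAut_apply, star_eq_conjTranspose] using hA.spectral_theorem

theorem vnEntropy_kronecker {m n : Type*} [Fintype m] [DecidableEq m] [Fintype n]
    [DecidableEq n] {X : Matrix m m ℂ} {Y : Matrix n n ℂ} (hX : X.IsHermitian)
    (hY : Y.IsHermitian) :
    vnEntropy (X ⊗ₖ Y) = Y.trace.re * vnEntropy X + X.trace.re * vnEntropy Y := by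
  obtain ⟨V, a, hV, rfl⟩ := hX.exists_conj_diagonal
  obtain ⟨W, b, hW, rfl⟩ := hY.exists_conj_diagonal
  have hVW : (V ⊗ₖ W)ᴴ * (V ⊗ₖ W) = 1 := by
    rw [conjTranspose_kronecker, ← mul_kronecker_mul, hV, hW, one_kronecker_one]
  have hprod :
      (V * diagonal (Complex.ofReal ∘ a) * Vᴴ) ⊗ₖ (W * diagonal (Complex.ofReal ∘ b) * Wᴴ) =
      (V ⊗ₖ W) * diagonal (Complex.ofReal ∘ fun x : m × n => a x.1 * b x.2) * (V ⊗ₖ W)ᴴ := by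
    rw [conjTranspose_kronecker, mul_kronecker_mul, mul_kronecker_mul, diagonal_kronecker_diagonal]
    congr 3
    ext x
    simp
  rw [hprod, vnEntropy_conj_isometry hVW (isHermitian_diagonal_ofReal _),
    vnEntropy_conj_isometry hV (isHermitian_diagonal_ofReal _),
    vnEntropy_conj_isometry hW (isHermitian_diagonal_ofReal _), vnEntropy_diagonal,
    vnEntropy_diagonal, vnEntropy_diagonal, trace_conj_isometry hV, trace_conj_isometry hW,
    trace_diagonal, trace_diagonal, Fintype.sum_prod_type]
  simp only [Real.negMulLog_mul, Finset.sum_add_distrib, Finset.mul_sum, Finset.sum_mul,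
    Complex.re_sum, Function.comp_apply, Complex.ofReal_re]
  rw [Finset.sum_comm (f := fun x y => a x * Real.negMulLog (b y))]

theorem vnEntropy_conj_kronecker {m n : Type*} [Fintype m] [DecidableEq m] [Fintype n]
    [DecidableEq n] {U : Matrix (m × n) κ ℂ} (hU : U * Uᴴ = 1) {X : Matrix m m ℂ}
    {Y : Matrix n n ℂ} (hX : X.IsHermitian) (hXtr : X.trace = 1) (hY : Y.IsHermitian)
    (hYtr : Y.trace = 1) : vnEntropy (Uᴴ * (X ⊗ₖ Y) * U) = vnEntropy X + vnEntropy Y := by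
  have hUh : Uᴴᴴ * Uᴴ = 1 := by rwa [conjTranspose_conjTranspose]
  have h := vnEntropy_conj_isometry hUh (isHermitian_kronecker hX hY)
  rw [conjTranspose_conjTranspose] at h
  rw [h, vnEntropy_kronecker hX hY, hXtr, hYtr]
  simp

theorem crossEnt_sum_smul {β : Type*} [Fintype β] (w : β → ℝ) (ρ : β → Matrix ι ι ℂ)
    (σ : Matrix ι ι ℂ) : crossEnt (∑ i, (w i : ℂ) • ρ i) σ = ∑ i, w i * crossEnt (ρ i) σ := by
  simp only [crossEnt, Matrix.sum_mul, Matrix.smul_mul, trace_sum, trace_smul, Complex.re_sum,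
    smul_eq_mul, Complex.re_ofReal_mul, mul_neg, Finset.sum_neg_distrib]

end Entropy

section Ensemble

variable {n : Type*} {r : ℕ} {v : Fin r → n → ℂ}

theorem OrthonormalFam.conjTranspose_mul_self [Fintype n] (hv : OrthonormalFam v) :
    (of v)ᵀᴴ * (of v)ᵀ = 1 := by
  ext i j
  simpa [mul_apply, one_apply] using hv i j

theorem OrthonormalFam.trace_outer [Fintype n] (hv : OrthonormalFam v) (i : Fin r) :
    (outer (v i)).trace = 1 := by
  simpa [outer, trace_vecMulVec, dotProduct, mul_comm] using hv i i

theorem sum_smul_outer_eq_conj_diagonal (p : Fin r → ℝ) (v : Fin r → n → ℂ) :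
    ∑ i, (p i : ℂ) • outer (v i) = (of v)ᵀ * diagonal (Complex.ofReal ∘ p) * (of v)ᵀᴴ := by
  ext a b
  rw [mul_apply]
  simp only [outer, Matrix.sum_apply, Matrix.smul_apply, vecMulVec_apply, mul_diagonal,
    transpose_apply, of_apply, conjTranspose_apply, Function.comp_apply, Pi.star_apply,
    smul_eq_mul]
  exact Finset.sum_congr rfl fun i _ => by ring

theorem isHermitian_outer [Fintype n] (w : n → ℂ) : (outer w).IsHermitian :=
  (posSemidef_vecMulVec_self_star w).isHermitian

theorem isHermitian_sum_smul_outer [Fintype n] (p : Fin r → ℝ) (v : Fin r → n → ℂ) :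
    (∑ i, (p i : ℂ) • outer (v i)).IsHermitian := by
  rw [sum_smul_outer_eq_conj_diagonal]
  exact isHermitian_mul_mul_conjTranspose _ (isHermitian_diagonal_ofReal p)

theorem OrthonormalFam.trace_sum_smul_outer [Fintype n] (hv : OrthonormalFam v) (p : Fin r → ℝ) :
    (∑ i, (p i : ℂ) • outer (v i)).trace = ∑ i, p i := by
  simp [trace_sum, trace_smul, hv.trace_outer]

theorem OrthonormalFam.vnEntropy_sum_smul_outer [Fintype n] [DecidableEq n]
    (hv : OrthonormalFam v) (p : Fin r → ℝ) :
    vnEntropy (∑ i, (p i : ℂ) • outer (v i)) = ∑ i, Real.negMulLog (p i) := by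
  rw [sum_smul_outer_eq_conj_diagonal, vnEntropy_conj_isometry hv.conjTranspose_mul_self
    (isHermitian_diagonal_ofReal p), vnEntropy_diagonal]

end Ensemble

section PartialTrace

variable {dA dB : ℕ}

theorem trace_ptraceB (M : Matrix (Fin dA × Fin dB) (Fin dA × Fin dB) ℂ) :
    (ptraceB M).trace = M.trace := by
  simp only [trace, ptraceB, diag, Fintype.sum_prod_type, of_apply]

theorem isHermitian_ptraceB {M : Matrix (Fin dA × Fin dB) (Fin dA × Fin dB) ℂ}
    (hM : M.IsHermitian) : (ptraceB M).IsHermitian := by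
  ext i j
  simp only [conjTranspose_apply, ptraceB, of_apply, star_sum]
  exact Finset.sum_congr rfl fun k _ => hM.apply _ _

theorem ptraceB_sum_smul {β : Type*} [Fintype β] (w : β → ℂ)
    (M : β → Matrix (Fin dA × Fin dB) (Fin dA × Fin dB) ℂ) :
    ptraceB (∑ i, w i • M i) = ∑ i, w i • ptraceB (M i) := by
  ext a b
  simp only [ptraceB, Matrix.sum_apply, Matrix.smul_apply, of_apply, smul_eq_mul, Finset.mul_sum]
  exact Finset.sum_comm

end PartialTrace

theorem sum_negMulLog_sub_le_log_sum_exp {β : Type*} [Fintype β] {p : β → ℝ}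
    (hp : ∀ i, 0 < p i) (hp1 : ∑ i, p i = 1) (c : β → ℝ) :
    ∑ i, Real.negMulLog (p i) - ∑ i, p i * c i ≤ Real.log (∑ i, Real.exp (-c i)) := by
  -- Jensen's inequality for the concave `log` at the points `exp (-c i) / p i`
  have h := strictConcaveOn_log_Ioi.concaveOn.le_map_sum (t := Finset.univ) (w := p)
    (p := fun i => Real.exp (-c i) / p i) (fun i _ => (hp i).le) hp1
    (fun i _ => div_pos (Real.exp_pos _) (hp i))
  have hpt : ∀ i, p i • (Real.exp (-c i) / p i) = Real.exp (-c i) := fun i => by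
    rw [smul_eq_mul, mul_div_cancel₀ _ (hp i).ne']
  have hlog : ∀ i, p i • Real.log (Real.exp (-c i) / p i) = Real.negMulLog (p i) - p i * c i :=
    fun i => by
      rw [smul_eq_mul, Real.log_div (Real.exp_pos _).ne' (hp i).ne', Real.log_exp, Real.negMulLog]
      ring
  simpa only [hpt, hlog, Finset.sum_sub_distrib] using h

/-- **Eq. (28)** (Entropic disturbance bound in the quantum autoencoder).
`Δχ ≤ ∑ i, pᵢ S(ρ_A⁽ⁱ⁾) + ln(∑ i, e^{-C(ρ_A⁽ⁱ⁾, ρ_A)})`. -/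
theorem qae_entropic_disturbance_bound
    {dA dB r : ℕ}
    (U : Matrix (Fin dA × Fin dB) (Fin dA × Fin dB) ℂ)
    (hU : U * U.conjTranspose = 1 ∧ U.conjTranspose * U = 1)
    (ρB : Matrix (Fin dB) (Fin dB) ℂ) (hρB : IsDensityMatrix ρB)
    (p : Fin r → ℝ) (hp : ∀ i, 0 < p i) (hp1 : ∑ i, p i = 1)
    (v : Fin r → (Fin dA × Fin dB) → ℂ) (hv : OrthonormalFam v)
    (ρin : Matrix (Fin dA × Fin dB) (Fin dA × Fin dB) ℂ)
    (hρin : ρin = ∑ i, (p i : ℂ) • outer (v i))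
    (ρA : Matrix (Fin dA) (Fin dA) ℂ) (hρA : ρA = ptraceB (U * ρin * U.conjTranspose))
    (ρAi : Fin r → Matrix (Fin dA) (Fin dA) ℂ)
    (hρAi : ∀ i, ρAi i = ptraceB (U * outer (v i) * U.conjTranspose))
    (ρout : Matrix (Fin dA × Fin dB) (Fin dA × Fin dB) ℂ)
    (hρout : ρout = U.conjTranspose * (ρA ⊗ₖ ρB) * U)
    (Φi : Fin r → Matrix (Fin dA × Fin dB) (Fin dA × Fin dB) ℂ)
    (hΦi : ∀ i, Φi i = U.conjTranspose * ((ρAi i) ⊗ₖ ρB) * U)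
    (Δχ : ℝ)
    (hΔχ : Δχ = vnEntropy ρin - (vnEntropy ρout - ∑ i, p i * vnEntropy (Φi i))) :
    Δχ ≤ ∑ i, p i * vnEntropy (ρAi i)
          + Real.log (∑ i, Real.exp (-(crossEnt (ρAi i) ρA))) := by
  obtain ⟨hUUh, hUhU⟩ := hU
  have hρinH : ρin.IsHermitian := hρin ▸ isHermitian_sum_smul_outer p v
  have hρin_tr : ρin.trace = 1 := by
    rw [hρin, hv.trace_sum_smul_outer, hp1, Complex.ofReal_one]
  have hρAH : ρA.IsHermitian :=
    hρA ▸ isHermitian_ptraceB (isHermitian_mul_mul_conjTranspose U hρinH)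
  have hρA_tr : ρA.trace = 1 := by
    rw [hρA, trace_ptraceB, trace_conj_isometry hUhU, hρin_tr]
  have hρAiH : ∀ i, (ρAi i).IsHermitian := fun i =>
    hρAi i ▸ isHermitian_ptraceB (isHermitian_mul_mul_conjTranspose U (isHermitian_outer (v i)))
  have hρAi_tr : ∀ i, (ρAi i).trace = 1 := fun i => by
    rw [hρAi i, trace_ptraceB, trace_conj_isometry hUhU, hv.trace_outer]
  have hSΦ : ∑ i, p i * vnEntropy (Φi i) = ∑ i, p i * vnEntropy (ρAi i) + vnEntropy ρB := by
    simp only [hΦi, vnEntropy_conj_kronecker hUUh (hρAiH _) (hρAi_tr _) hρB.1.1 hρB.2, mul_add,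
      Finset.sum_add_distrib, ← Finset.sum_mul, hp1, one_mul]
  have hmix : ρA = ∑ i, (p i : ℂ) • ρAi i := by
    simp only [hρA, hρin, hρAi, Matrix.mul_sum, Matrix.sum_mul, Matrix.mul_smul, Matrix.smul_mul,
      ptraceB_sum_smul]
  have hSA : vnEntropy ρA = ∑ i, p i * crossEnt (ρAi i) ρA := by
    rw [vnEntropy]
    nth_rewrite 1 [hmix]
    exact crossEnt_sum_smul p ρAi ρA
  have hGibbs := sum_negMulLog_sub_le_log_sum_exp hp hp1 fun i => crossEnt (ρAi i) ρA
  rw [hΔχ, hρout, vnEntropy_conj_kronecker hUUh hρAH hρA_tr hρB.1.1 hρB.2, hSΦ, hρin,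
    hv.vnEntropy_sum_smul_outer]
  linarith

end QCE
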